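/- Suppose π ≤ 1/2 and 1−x′ ≥ x ≥ 1/2 (i.e. P(A=ā|C=c̄) ≥ P(A=a|C=c) ≥ 1/2). If y₁ − y₂ ≥ y₄ − y₃ ≥ 0, then RD_crude ≥ RD_true; and if y₁ − y₂ ≤ y₄ − y₃ ≤ 0, then RD_crude ≤ RD_true. (Paper's Theorem 11.) -/

import Mathlib

/-!
Write `P(c|a) = π + k₁` and `P(c|ā) = π - k₂`. Bayes' rule gives `k₁ = π(1-π)(x-x')/d₁` and
`k₂ = π(1-π)(x-x')/d₂`, where `d₁ = P(a)` and `d₂ = P(ā)`, and then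
`RD_crude - RD_true = (y₁-y₂) k₁ - (y₄-y₃) k₂`.
The hypotheses give `x' ≤ 1-x ≤ x` and `d₁ ≤ d₂`, so `0 ≤ k₂ ≤ k₁`, which fixes the sign of the bias
once `y₁-y₂` and `y₄-y₃` are ordered as in the theorem.
-/

/-- `P(C = c | A = a)` by Bayes' rule, for `P(C = c) = p`, `P(a | c) = x` and `P(a | c̄) = x'`. -/
noncomputable def posterior (p x x' : ℝ) : ℝ := x * p / (x * p + x' * (1 - p))

theorem posterior_sub_prior {p x x' : ℝ} (h : x * p + x' * (1 - p) ≠ 0) :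
    posterior p x x' - p = p * (1 - p) * (x - x') / (x * p + x' * (1 - p)) := by
  unfold posterior
  field_simp
  ring

theorem crude_sub_true_eq (p q r y₁ y₂ y₃ y₄ : ℝ) :
    (y₁ * q + y₂ * (1 - q)) - (y₃ * r + y₄ * (1 - r)) - ((y₁ - y₃) * p + (y₂ - y₄) * (1 - p)) =
      (y₁ - y₂) * (q - p) - (y₄ - y₃) * (p - r) := by
  ring

theorem prior_sub_posterior_compl_nonneg_and_le {p x x' : ℝ} (hp : 0 < p) (hp2 : p ≤ 1 / 2)
    (hx' : 0 ≤ x') (hxx' : x ≤ 1 - x') (hx : 1 / 2 ≤ x) :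
    0 ≤ p - posterior p (1 - x) (1 - x') ∧
      p - posterior p (1 - x) (1 - x') ≤ posterior p x x' - p := by
  have hd₁ : 0 < x * p + x' * (1 - p) := by nlinarith
  -- `d₂ - d₁ = (1 - 2x) p + (1 - 2x') (1 - p) ≥ (2x - 1)(1 - 2p)`
  have hd : x * p + x' * (1 - p) ≤ (1 - x) * p + (1 - x') * (1 - p) := by nlinarith
  have hd₂ : 0 < (1 - x) * p + (1 - x') * (1 - p) := hd₁.trans_le hd
  have ha : 0 ≤ p * (1 - p) * (x - x') :=
    mul_nonneg (mul_nonneg hp.le (by linarith)) (by linarith)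
  have hk₂ : p - posterior p (1 - x) (1 - x') =
      p * (1 - p) * (x - x') / ((1 - x) * p + (1 - x') * (1 - p)) := by
    rw [← neg_sub, posterior_sub_prior hd₂.ne', ← neg_div]
    ring
  rw [hk₂, posterior_sub_prior hd₁.ne']
  exact ⟨div_nonneg ha hd₂.le, div_le_div_of_nonneg_left ha hd₁ hd⟩

theorem thm11_general (pc x x' : ℝ) (y₁ y₂ y₃ y₄ : ℝ)
    (hpc : 0 < pc)
    (hx'0 : 0 < x')
    (hpcle : pc ≤ 1/2) (hxx' : 1 - x' ≥ x) (hxge : x ≥ 1/2)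
    (Pca Pcab RDtrue RDcrude : ℝ)
    (hPca : Pca = x*pc/(x*pc + x'*(1-pc)))
    (hPcab : Pcab = (1-x)*pc/((1-x)*pc + (1-x')*(1-pc)))
    (hRDtrue : RDtrue = (y₁-y₃)*pc + (y₂-y₄)*(1-pc))
    (hRDcrude : RDcrude = (y₁*Pca + y₂*(1-Pca)) - (y₃*Pcab + y₄*(1-Pcab))) :
    (y₁ - y₂ ≥ y₄ - y₃ ∧ y₄ - y₃ ≥ 0 → RDcrude ≥ RDtrue) ∧
    (y₁ - y₂ ≤ y₄ - y₃ ∧ y₄ - y₃ ≤ 0 → RDcrude ≤ RDtrue) := by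
  obtain ⟨hk₂, hk⟩ := prior_sub_posterior_compl_nonneg_and_le hpc hpcle hx'0.le hxx' hxge
  have hbias : RDcrude - RDtrue = (y₁ - y₂) * (posterior pc x x' - pc) -
      (y₄ - y₃) * (pc - posterior pc (1 - x) (1 - x')) := by
    rw [hRDcrude, hRDtrue, hPca, hPcab]
    exact crude_sub_true_eq ..
  constructor
  · rintro ⟨h₁, h₂⟩
    linarith [mul_le_mul h₁ hk hk₂ (h₂.trans h₁)]
  · rintro ⟨h₁, h₂⟩
    linarith [mul_le_mul_of_nonneg_right h₁ (hk₂.trans hk), mul_le_mul_of_nonpos_left hk h₂]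

theorem thm11 (pc x x' : ℝ) (y₁ y₂ y₃ y₄ : ℝ)
    (hpc : 0 < pc) (hpc1 : pc < 1)
    (hx0 : 0 < x) (hx1 : x < 1) (hx'0 : 0 < x') (hx'1 : x' < 1)
    (hpcle : pc ≤ 1/2) (hxx' : 1 - x' ≥ x) (hxge : x ≥ 1/2)
    (Pca Pcab RDtrue RDcrude : ℝ)
    (hPca : Pca = x*pc/(x*pc + x'*(1-pc)))
    (hPcab : Pcab = (1-x)*pc/((1-x)*pc + (1-x')*(1-pc)))
    (hRDtrue : RDtrue = (y₁-y₃)*pc + (y₂-y₄)*(1-pc))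
    (hRDcrude : RDcrude = (y₁*Pca + y₂*(1-Pca)) - (y₃*Pcab + y₄*(1-Pcab))) :
    (y₁ - y₂ ≥ y₄ - y₃ ∧ y₄ - y₃ ≥ 0 → RDcrude ≥ RDtrue) ∧
    (y₁ - y₂ ≤ y₄ - y₃ ∧ y₄ - y₃ ≤ 0 → RDcrude ≤ RDtrue) :=
  thm11_general pc x x' y₁ y₂ y₃ y₄ hpc hx'0 hpcle hxx' hxge Pca Pcab RDtrue RDcrude hPca hPcab
    hRDtrue hRDcrude
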